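/- Let k ≥ 1, m ≥ k, and define G : F_{2^k} × F_{2^k} → F_{2^k} × F_2^{m-k} by G(x,y) = (x^{2^i} π(y) + g(y), h(y)), where π is a permutation of F_{2^k}, g : F_{2^k} → F_{2^k} and h : F_{2^k} → F_2^{m-k} are arbitrary, and 0 ≤ i < k. Then for any nonzero (u,v) ∈ F_{2^k} × F_2^{m-k}, the component function (x,y) ↦ Tr^k_1(u(x^{2^i}π(y)+g(y))) + ⟨v, h(y)⟩ is bent if and only if u ≠ 0. In particular G has exactly 2^m - 2^{m-k} bent components, the maximal possible number. -/

import Mathlib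

open Finset

def chr (b : ZMod 2) : ℤ := if b = 0 then 1 else -1

def ip {r : ℕ} (a b : Fin r → ZMod 2) : ZMod 2 := ∑ i, a i * b i

variable {K : Type*} [Field K] [Fintype K] [Algebra (ZMod 2) K]

/-- The absolute trace `Tr^k_1 : F_{2^k} → F_2`. -/
noncomputable def tr (x : K) : ZMod 2 := Algebra.trace (ZMod 2) K x

/-- Walsh transform of a Boolean function on `F_{2^k} × F_{2^k}`. -/
noncomputable def walsh2 (f : K × K → ZMod 2) (l : K × K) : ℤ :=
  ∑ x : K × K, chr (f x + tr (l.1 * x.1) + tr (l.2 * x.2))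

/-- `f` is bent on `F_{2^k} × F_{2^k}`: all Walsh values are `±2^k`. -/
def IsBent2 (k : ℕ) (f : K × K → ZMod 2) : Prop :=
  ∀ l : K × K, walsh2 f l = 2 ^ k ∨ walsh2 f l = -(2 ^ k)

/-! For `u ≠ 0` the component is of Maiorana–McFarland type: `σ : x ↦ x ^ 2 ^ i` is a field
automorphism preserving the trace, so `Tr(u x^{2^i} π(y)) = Tr(x σ⁻¹(u π(y)))` with
`y ↦ σ⁻¹(u π(y))` a permutation. In the Walsh sum the inner sum over `x` is a character sum that,
by nondegeneracy of the trace form, vanishes except at the single `y` with `σ⁻¹(u π(y)) = a`,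
leaving `±2^k`. For `u = 0` the component does not depend on `x`, so its Walsh transform vanishes
at `(a, 0)` for `a ≠ 0`. Counting the pairs with `u ≠ 0` gives `(2^k - 1) 2^{m-k}`. -/

instance : CharP K 2 := charP_of_injective_algebraMap (algebraMap (ZMod 2) K).injective 2

lemma chr_add (a b : ZMod 2) : chr (a + b) = chr a * chr b := by decide +revert

lemma chr_eq_one_or_eq_neg_one (a : ZMod 2) : chr a = 1 ∨ chr a = -1 := by decide +revert

section

variable {L : Type*} [Field L] [Algebra (ZMod 2) L]

lemma tr_add (x y : L) : tr (x + y) = tr x + tr y := map_add _ x y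

lemma tr_zero : tr (0 : L) = 0 := map_zero _

lemma tr_algEquiv (e : L ≃ₐ[ZMod 2] L) (x : L) : tr (e x) = tr x :=
  Algebra.trace_eq_of_algEquiv e x

end

lemma exists_tr_mul_ne_zero {c : K} (hc : c ≠ 0) : ∃ x, tr (c * x) ≠ 0 := by
  have hnondeg := (traceForm_nondegenerate (ZMod 2) K).1 c
  by_contra! hzero
  exact hc (hnondeg (by simpa [tr, Algebra.traceForm_apply] using hzero))

lemma sum_chr_tr_mul_of_ne_zero {c : K} (hc : c ≠ 0) : ∑ x : K, chr (tr (c * x)) = 0 := by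
  obtain ⟨x₀, hx₀_ne⟩ := exists_tr_mul_ne_zero hc
  have hx₀ : tr (c * x₀) = 1 := by revert hx₀_ne; generalize tr (c * x₀) = b; decide +revert
  -- translating by `x₀` flips the sign of every term
  have hflip : ∑ x : K, chr (tr (c * x)) = -∑ x : K, chr (tr (c * x)) := calc
    _ = ∑ x : K, chr (tr (c * (x + x₀))) :=
      (Fintype.sum_equiv (Equiv.addRight x₀) _ _ fun _ => rfl).symm
    _ = ∑ x : K, -chr (tr (c * x)) := by
      refine Finset.sum_congr rfl fun x _ => ?_
      rw [mul_add, tr_add, chr_add, hx₀]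
      simp [chr]
    _ = _ := Finset.sum_neg_distrib _
  linarith

lemma walsh2_maioranaMcFarland {φ : K → K} (hφ : Function.Injective φ) (G : K → ZMod 2)
    {a y₀ : K} (hy₀ : φ y₀ = a) (b : K) :
    walsh2 (fun p : K × K => tr (p.1 * φ p.2) + G p.2) (a, b) =
      Fintype.card K * chr (G y₀ + tr (b * y₀)) := by
  have hterm : ∀ x y, chr (tr (x * φ y) + G y + tr (a * x) + tr (b * y)) =
      chr (G y + tr (b * y)) * chr (tr ((φ y + a) * x)) := by
    intro x y
    rw [← chr_add, add_mul, tr_add, mul_comm (φ y)]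
    congr 1
    ring
  simp only [walsh2, Fintype.sum_prod_type_right, hterm, ← Finset.mul_sum]
  rw [Finset.sum_eq_single y₀ (fun y _ hy => ?_) (by simp)]
  · simp [hy₀, CharTwo.add_self_eq_zero, tr_zero, chr, mul_comm]
  rw [sum_chr_tr_mul_of_ne_zero, mul_zero]
  rwa [Ne, CharTwo.add_eq_zero, hφ.eq_iff' hy₀]

theorem isBent2_maioranaMcFarland {k : ℕ} (hcard : Fintype.card K = 2 ^ k) {φ : K → K}
    (hφ : Function.Bijective φ) (G : K → ZMod 2) :
    IsBent2 k (fun p : K × K => tr (p.1 * φ p.2) + G p.2) := by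
  rintro ⟨a, b⟩
  obtain ⟨y₀, hy₀⟩ := hφ.surjective a
  rw [walsh2_maioranaMcFarland hφ.injective G hy₀, hcard]
  rcases chr_eq_one_or_eq_neg_one (G y₀ + tr (b * y₀)) with h | h <;> simp [h]

lemma walsh2_snd_eq_zero (G : K → ZMod 2) {a : K} (ha : a ≠ 0) :
    walsh2 (fun p : K × K => G p.2) (a, 0) = 0 := by
  simp only [walsh2, zero_mul, tr_zero, add_zero, chr_add, Fintype.sum_prod_type_right,
    ← Finset.mul_sum, sum_chr_tr_mul_of_ne_zero ha, mul_zero, Finset.sum_const_zero]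

lemma not_isBent2_snd (k : ℕ) (G : K → ZMod 2) : ¬ IsBent2 k (fun p : K × K => G p.2) := by
  intro hbent
  obtain ⟨a, ha⟩ := exists_ne (0 : K)
  have hwalsh := hbent (a, 0)
  rw [walsh2_snd_eq_zero G ha] at hwalsh
  have : (0 : ℤ) < 2 ^ k := by positivity
  omega

lemma frobeniusAlgEquiv_pow_apply (i : ℕ) (x : K) :
    (FiniteField.frobeniusAlgEquiv (ZMod 2) K 2 ^ i) x = x ^ 2 ^ i := by
  induction i with
  | zero => simp
  | succ n ih => rw [pow_succ', AlgEquiv.mul_apply, ih]; simp [ZMod.card, pow_succ, pow_mul]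

lemma tr_mul_pow_two_pow (i : ℕ) (c x : K) :
    tr (x ^ 2 ^ i * c) = tr (x * (FiniteField.frobeniusAlgEquiv (ZMod 2) K 2 ^ i).symm c) := by
  set σ := FiniteField.frobeniusAlgEquiv (ZMod 2) K 2 ^ i
  rw [← frobeniusAlgEquiv_pow_apply, ← tr_algEquiv σ.symm, map_mul, AlgEquiv.symm_apply_apply]

theorem isBent2_component_iff {k : ℕ} (hcard : Fintype.card K = 2 ^ k) (i : ℕ) {π : K → K}
    (hπ : Function.Bijective π) (g : K → K) {r : ℕ} (h : K → Fin r → ZMod 2) (u : K)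
    (v : Fin r → ZMod 2) :
    IsBent2 k (fun p : K × K => tr (u * (p.1 ^ 2 ^ i * π p.2 + g p.2)) + ip v (h p.2)) ↔
      u ≠ 0 := by
  rcases eq_or_ne u 0 with rfl | hu
  · simpa [tr_zero] using not_isBent2_snd k (fun y => ip v (h y))
  set σ := FiniteField.frobeniusAlgEquiv (ZMod 2) K 2 ^ i
  have hφ : Function.Bijective fun y => σ.symm (u * π y) :=
    σ.symm.bijective.comp ((mulLeft_bijective₀ u hu).comp hπ)
  simp only [ne_eq, hu, not_false_eq_true, iff_true]
  convert isBent2_maioranaMcFarland hcard hφ (fun y => tr (u * g y) + ip v (h y)) using 2 with p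
  rw [mul_add, tr_add, mul_left_comm, tr_mul_pow_two_pow, add_assoc]

lemma card_setOf_fst_ne_zero (α β : Type*) [Zero α] [Fintype α] [DecidableEq α] [Fintype β] :
    Nat.card {ab : α × β | ab.1 ≠ 0} = (Fintype.card α - 1) * Fintype.card β := by
  rw [Set.coe_ofPred, Nat.card_congr (Equiv.prodSubtypeFstEquivSubtypeProd (p := (· ≠ 0))),
    Nat.card_prod]
  simp [Fintype.card_subtype_compl]

theorem stmt7_general (k m i : ℕ) (hm : k ≤ m)
    (hcard : Fintype.card K = 2 ^ k)
    (π : K → K) (hπ : Function.Bijective π)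
    (g : K → K) (h : K → Fin (m - k) → ZMod 2) :
    (∀ (u : K) (v : Fin (m - k) → ZMod 2), (u, v) ≠ 0 →
      (IsBent2 k (fun p : K × K =>
          tr (u * (p.1 ^ (2 ^ i) * π p.2 + g p.2)) + ip v (h p.2)) ↔ u ≠ 0)) ∧
    Nat.card {uv : K × (Fin (m - k) → ZMod 2) | uv ≠ 0 ∧
        IsBent2 k (fun p : K × K =>
          tr (uv.1 * (p.1 ^ (2 ^ i) * π p.2 + g p.2)) + ip uv.2 (h p.2))} =
      2 ^ m - 2 ^ (m - k) := by
  classical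
  have hbent := isBent2_component_iff hcard i hπ g h
  refine ⟨fun u v _ => hbent u v, ?_⟩
  have hset : {uv : K × (Fin (m - k) → ZMod 2) | uv ≠ 0 ∧
      IsBent2 k (fun p : K × K =>
        tr (uv.1 * (p.1 ^ (2 ^ i) * π p.2 + g p.2)) + ip uv.2 (h p.2))} = {uv | uv.1 ≠ 0} := by
    ext ⟨u, v⟩
    simp only [Set.mem_ofPred_eq, hbent]
    exact ⟨And.right, fun hu => ⟨fun h0 => hu (congrArg Prod.fst h0), hu⟩⟩
  rw [hset, card_setOf_fst_ne_zero, hcard, Fintype.card_fun, ZMod.card, Fintype.card_fin,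
    Nat.sub_one_mul, ← pow_add, Nat.add_sub_cancel' hm]

theorem stmt7 (k m i : ℕ) (hk : 0 < k) (hm : k ≤ m) (hi : i < k)
    (hcard : Fintype.card K = 2 ^ k)
    (π : K → K) (hπ : Function.Bijective π)
    (g : K → K) (h : K → Fin (m - k) → ZMod 2) :
    (∀ (u : K) (v : Fin (m - k) → ZMod 2), (u, v) ≠ 0 →
      (IsBent2 k (fun p : K × K =>
          tr (u * (p.1 ^ (2 ^ i) * π p.2 + g p.2)) + ip v (h p.2)) ↔ u ≠ 0)) ∧
    Nat.card {uv : K × (Fin (m - k) → ZMod 2) | uv ≠ 0 ∧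
        IsBent2 k (fun p : K × K =>
          tr (uv.1 * (p.1 ^ (2 ^ i) * π p.2 + g p.2)) + ip uv.2 (h p.2))} =
      2 ^ m - 2 ^ (m - k) :=
  stmt7_general k m i hm hcard π hπ g h
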